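/- arXiv:2603.16798 — 2 statements merged into one kernel-verified Lean document; each statement's English description precedes it below -/
import Mathlib

section
/- For any ε, δ ∈ (0,1), there exists a measurable function g : ℝ → [0,∞) such that: (i) (1−ε)·φ(x−δ) ≤ g(x) ≤ φ(x−δ) for all x ∈ ℝ; (ii) ∫_ℝ g(x) dx = 1 − ε/2; and (iii) g(x) = (1−ε/2)·φ(x) for all x ∈ [−B+δ/2, B+δ/2], where B := (1/δ)·log(1 + (ε/2)/(1−ε/2)). -/
/-!
Put `q = 1 - ε/2` and `ψ(x) = φ(x - δ)`. Since `ψ(x) = e^{δx - δ²/2} φ(x)` and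
`e^{δB} = 1/q`, on `I = [δ/2 - B, δ/2 + B]` the function `q φ` lies between `(1 - ε) ψ`
and `ψ` (for the lower bound use `1 - ε ≤ q²`). Take `g = q φ` on `I` and `g = q ψ` off `I`.
The interval `I` is symmetric about `δ/2`, so the reflection `x ↦ δ - x` shows that `φ` and `ψ`
have the same integral over `I`; hence `∫ g = q ∫ ψ = q`.
-/

open MeasureTheory

/-- The probability density function of the standard Gaussian `N(0,1)`. -/
noncomputable def gaussPDF (x : ℝ) : ℝ := Real.exp (-x ^ 2 / 2) / Real.sqrt (2 * Real.pi)

open ProbabilityTheory Set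

theorem integral_piecewise_eq_of_setIntegral_eq {α E : Type*} [MeasurableSpace α]
    [NormedAddCommGroup E] [NormedSpace ℝ E] {μ : Measure α} {s : Set α} [DecidablePred (· ∈ s)]
    (hs : MeasurableSet s) {f g : α → E} (hf : IntegrableOn f s μ) (hg : Integrable g μ)
    (h : ∫ x in s, f x ∂μ = ∫ x in s, g x ∂μ) :
    ∫ x, s.piecewise f g x ∂μ = ∫ x, g x ∂μ := by
  rw [integral_piecewise hs hf hg.integrableOn, h, integral_add_compl hs hg]

theorem setIntegral_Icc_comp_sub_of_even {E : Type*} [NormedAddCommGroup E] [NormedSpace ℝ E]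
    {f : ℝ → E} (hf : ∀ x, f (-x) = f x) {a b δ : ℝ} (hδ : a + b = δ) :
    ∫ x in Icc a b, f (x - δ) = ∫ x in Icc a b, f x := by
  rcases le_or_gt a b with hab | hab
  · simp only [integral_Icc_eq_integral_Ioc, ← intervalIntegral.integral_of_le hab]
    simp_rw [← hf (_ - δ), neg_sub, intervalIntegral.integral_comp_sub_left]
    congr 1 <;> linarith
  · simp [Icc_eq_empty_of_lt hab]

theorem one_add_div_one_sub {t : ℝ} (ht : t ≠ 1) : 1 + t / (1 - t) = (1 - t)⁻¹ := by
  have : 1 - t ≠ 0 := sub_ne_zero.mpr ht.symm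
  field_simp
  ring

theorem abs_mul_sub_le_of_mem_Icc {δ L x : ℝ} (hδ : 0 < δ)
    (hx : x ∈ Icc (-((1 / δ) * L) + δ / 2) ((1 / δ) * L + δ / 2)) :
    |δ * x - δ ^ 2 / 2| ≤ L := by
  obtain ⟨hlow, hupp⟩ := hx
  rw [one_div_mul_eq_div] at hlow hupp
  have hx' : |x - δ / 2| ≤ L / δ := abs_sub_le_iff.mpr ⟨by linarith, by linarith⟩
  calc |δ * x - δ ^ 2 / 2| = δ * |x - δ / 2| := by
        rw [show δ * x - δ ^ 2 / 2 = δ * (x - δ / 2) by ring, abs_mul, abs_of_pos hδ]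
    _ ≤ δ * (L / δ) := by gcongr
    _ = L := by field_simp

theorem gaussPDF_sub_eq_gaussianPDFReal (x δ : ℝ) : gaussPDF (x - δ) = gaussianPDFReal δ 1 x := by
  simp [gaussPDF, gaussianPDFReal, div_eq_inv_mul]

theorem gaussPDF_eq_gaussianPDFReal (x : ℝ) : gaussPDF x = gaussianPDFReal 0 1 x := by
  simpa using gaussPDF_sub_eq_gaussianPDFReal x 0

theorem integrable_gaussPDF : Integrable gaussPDF := by
  simpa only [← funext gaussPDF_eq_gaussianPDFReal] using integrable_gaussianPDFReal 0 1

theorem integrable_gaussPDF_comp_sub (δ : ℝ) : Integrable fun x ↦ gaussPDF (x - δ) := by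
  simpa only [gaussPDF_sub_eq_gaussianPDFReal] using integrable_gaussianPDFReal δ 1

theorem integral_gaussPDF_comp_sub (δ : ℝ) : ∫ x, gaussPDF (x - δ) = 1 := by
  simpa only [gaussPDF_sub_eq_gaussianPDFReal] using integral_gaussianPDFReal_eq_one δ one_ne_zero

theorem gaussPDF_nonneg (x : ℝ) : 0 ≤ gaussPDF x := by
  rw [gaussPDF_eq_gaussianPDFReal]; exact gaussianPDFReal_nonneg _ _ _

theorem gaussPDF_neg (x : ℝ) : gaussPDF (-x) = gaussPDF x := by
  simp [gaussPDF]

theorem continuous_gaussPDF : Continuous gaussPDF := by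
  unfold gaussPDF; fun_prop

theorem gaussPDF_sub_eq_exp_mul (x δ : ℝ) :
    gaussPDF (x - δ) = Real.exp (δ * x - δ ^ 2 / 2) * gaussPDF x := by
  rw [gaussPDF, gaussPDF, ← mul_div_assoc, ← Real.exp_add]
  ring_nf

theorem gaussPDF_sub_mem_Icc_of_abs_le {q x δ : ℝ} (hq : 0 < q)
    (h : |δ * x - δ ^ 2 / 2| ≤ Real.log q⁻¹) :
    gaussPDF (x - δ) ∈ Icc (q * gaussPDF x) (q⁻¹ * gaussPDF x) := by
  obtain ⟨hlow, hupp⟩ := abs_le.mp h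
  rw [Real.log_inv, neg_neg] at hlow
  have hφ := gaussPDF_nonneg x
  rw [gaussPDF_sub_eq_exp_mul]
  constructor
  · calc q * gaussPDF x = Real.exp (Real.log q) * gaussPDF x := by rw [Real.exp_log hq]
      _ ≤ _ := by gcongr
  · calc _ ≤ Real.exp (Real.log q⁻¹) * gaussPDF x := by gcongr
      _ = q⁻¹ * gaussPDF x := by rw [Real.exp_log (inv_pos.mpr hq)]

theorem mul_gaussPDF_mem_Icc_of_mem_Icc {ε δ x : ℝ} (hε : ε ≤ 1) (hδ : 0 < δ)
    (hx : x ∈ Icc (-((1 / δ) * Real.log (1 + (ε / 2) / (1 - ε / 2))) + δ / 2)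
      ((1 / δ) * Real.log (1 + (ε / 2) / (1 - ε / 2)) + δ / 2)) :
    (1 - ε / 2) * gaussPDF x ∈ Icc ((1 - ε) * gaussPDF (x - δ)) (gaussPDF (x - δ)) := by
  have hq : 0 < 1 - ε / 2 := by linarith
  rw [one_add_div_one_sub (by linarith)] at hx
  obtain ⟨hupp, hlow⟩ := gaussPDF_sub_mem_Icc_of_abs_le hq (abs_mul_sub_le_of_mem_Icc hδ hx)
  refine ⟨?_, hupp⟩
  have hq_sq : (1 - ε) * (1 - ε / 2)⁻¹ ≤ 1 - ε / 2 := by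
    rw [mul_inv_le_iff₀ hq]; nlinarith [sq_nonneg ε]
  have hφ := gaussPDF_nonneg x
  calc (1 - ε) * gaussPDF (x - δ) ≤ (1 - ε) * ((1 - ε / 2)⁻¹ * gaussPDF x) := by gcongr
    _ ≤ (1 - ε / 2) * gaussPDF x := by rw [← mul_assoc]; gcongr

/-- For any `ε, δ ∈ (0,1)` there is a measurable `g : ℝ → [0,∞)` with
`(1−ε)·φ(x−δ) ≤ g(x) ≤ φ(x−δ)` everywhere, total integral `1 − ε/2`, and
`g(x) = (1−ε/2)·φ(x)` on `[−B+δ/2, B+δ/2]`, where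
`B = (1/δ)·log(1 + (ε/2)/(1−ε/2))`. -/
theorem stmt1 (ε δ : ℝ) (hε : ε ∈ Set.Ioo (0 : ℝ) 1) (hδ : δ ∈ Set.Ioo (0 : ℝ) 1) :
    ∃ g : ℝ → ℝ, Measurable g ∧ (∀ x : ℝ, 0 ≤ g x) ∧
      (∀ x : ℝ, (1 - ε) * gaussPDF (x - δ) ≤ g x ∧ g x ≤ gaussPDF (x - δ)) ∧
      (∫ x : ℝ, g x) = 1 - ε / 2 ∧
      ∀ x ∈ Set.Icc (-((1 / δ) * Real.log (1 + (ε / 2) / (1 - ε / 2))) + δ / 2)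
          ((1 / δ) * Real.log (1 + (ε / 2) / (1 - ε / 2)) + δ / 2),
        g x = (1 - ε / 2) * gaussPDF x := by
  obtain ⟨hε0, hε1⟩ := hε
  set I := Icc (-((1 / δ) * Real.log (1 + (ε / 2) / (1 - ε / 2))) + δ / 2)
    ((1 / δ) * Real.log (1 + (ε / 2) / (1 - ε / 2)) + δ / 2)
  classical
  set g := fun x ↦ (1 - ε / 2) * I.piecewise gaussPDF (fun y ↦ gaussPDF (y - δ)) x
  have hg_mem : ∀ x ∈ I, g x = (1 - ε / 2) * gaussPDF x := fun x hx ↦ by simp [g, hx]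
  have hg_bounds : ∀ x, (1 - ε) * gaussPDF (x - δ) ≤ g x ∧ g x ≤ gaussPDF (x - δ) := by
    intro x
    by_cases hx : x ∈ I
    · rw [hg_mem x hx]
      exact mul_gaussPDF_mem_Icc_of_mem_Icc hε1.le hδ.1 hx
    · have hψ := gaussPDF_nonneg (x - δ)
      simp only [g, Set.piecewise_eq_of_notMem _ _ _ hx]
      constructor <;> nlinarith
  refine ⟨g, ?_, fun x ↦ ?_, hg_bounds, ?_, hg_mem⟩
  · exact (continuous_gaussPDF.measurable.piecewise measurableSet_Icc
      (continuous_gaussPDF.comp (continuous_sub_right δ)).measurable).const_mul _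
  · nlinarith [(hg_bounds x).1, gaussPDF_nonneg (x - δ)]
  · rw [integral_const_mul, integral_piecewise_eq_of_setIntegral_eq measurableSet_Icc
      integrable_gaussPDF.integrableOn (integrable_gaussPDF_comp_sub δ)
      (setIntegral_Icc_comp_sub_of_even gaussPDF_neg (by ring)).symm,
      integral_gaussPDF_comp_sub, mul_one]
end

section
/- There exists an absolute constant c > 0 such that for every ε ∈ (0,1), every δ > 0 with δ² ≤ log(1 + ε/(1−ε)), and every positive integer n, the following holds. There exist probability distributions Q₁ and Q₂ on ℝ ∪ {⊥} such that: (i) Q₁ is an ε-corrupted version of N(−δ/2,1) and Q₂ is an ε-corrupted version of N(δ/2,1); and (ii) the total variation distance between the n-fold product measures satisfies D_TV(Q₁^⊗n, Q₂^⊗n) ≤ (n/(1−ε))·exp(−c·((1/δ)·log(1 + ε/(1−ε)))²). -/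
open MeasureTheory

/-- Measurable space structure on `Option α`: a set is measurable iff its preimage
under `some` is measurable. -/
instance optionMeasurableSpace {α : Type*} [m : MeasurableSpace α] :
    MeasurableSpace (Option α) := m.map some

/-- `Q` is an `ε`-corrupted version (realizable `ε`-contamination model) of the
distribution on `ℝ` with density `p`: there is a measurable `f` with
`(1−ε)·p ≤ f ≤ p` such that `Q` assigns mass `∫_A f` to every measurable `A ⊆ ℝ`
(embedded via `some`) and mass `1 − ∫ f` to `{⊥}` (i.e. `{none}`). -/
def IsCorruptedVersion (ε : ℝ) (p : ℝ → ℝ) (Q : Measure (Option ℝ)) : Prop :=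
  IsProbabilityMeasure Q ∧
  ∃ f : ℝ → ℝ, Measurable f ∧ (∀ x : ℝ, (1 - ε) * p x ≤ f x ∧ f x ≤ p x) ∧
    (∀ A : Set ℝ, MeasurableSet A → Q (Option.some '' A) = ENNReal.ofReal (∫ x in A, f x)) ∧
    Q {none} = ENNReal.ofReal (1 - ∫ x : ℝ, f x)

/-- Total variation distance between two measures: the supremum over measurable sets of
the absolute difference of the assigned masses. -/
noncomputable def tvDist {α : Type*} [MeasurableSpace α] (P Q : Measure α) : ℝ :=
  ⨆ s : {s : Set α // MeasurableSet s}, |(P s).toReal - (Q s).toReal|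

/-!
Write `p₁, p₂` for the densities of `N(∓δ/2, 1)` and `L = log (1 + ε/(1-ε)) = -log (1-ε)`.
Corrupt `p₁` to `f₁ = max ((1-ε) p₁) (min p₁ p₂)` and `p₂` to `f₂ = max ((1-ε) p₂) (min p₁ p₂)`,
sending the removed mass to `⊥`. The reflection `x ↦ -x` swaps the two constructions, so both send
the same mass to `⊥`, and both corrupted laws dominate the measure `ν` with density `min p₁ p₂` and
that mass at `⊥`. Hence `D_TV(Q₁^⊗n, Q₂^⊗n) ≤ 1 - ν(total)^n ≤ n ∫ (f₁ - min p₁ p₂)`.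
Since `p₂ / p₁ = exp (δ x) ≥ exp (-L) = 1 - ε` for `x ≥ -L/δ`, there `f₁ = min p₁ p₂`, so the
integral is at most the Gaussian tail `P(N(-δ/2, 1) ≤ -L/δ) ≤ exp (-(L/δ - δ/2)² / 2)`, and
`δ² ≤ L` gives `δ/2 ≤ L/(2δ)`, whence the bound with `c = 1/8`.
-/

open ProbabilityTheory Real Set
open scoped ENNReal NNReal

section OptionMeasure

lemma preimage_some_singleton_none {α : Type*} : (some ⁻¹' {none} : Set α) = ∅ :=
  eq_empty_of_forall_notMem fun x => Option.some_ne_none x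

variable {α : Type*} [MeasurableSpace α]

lemma measurable_some : Measurable (some : α → Option α) := fun _ hs => hs

lemma measurableSet_some_image {A : Set α} (hA : MeasurableSet A) :
    MeasurableSet (some '' A : Set (Option α)) := by
  show MeasurableSet (some ⁻¹' (some '' A))
  rwa [preimage_image_eq _ (Option.some_injective α)]

lemma measurableSet_none : MeasurableSet ({none} : Set (Option α)) := by
  show MeasurableSet (some ⁻¹' ({none} : Set (Option α)))
  rw [preimage_some_singleton_none]
  exact MeasurableSet.empty

namespace MeasureTheory.Measure

noncomputable def withNoneMass (ρ : Measure α) (c : ℝ≥0∞) : Measure (Option α) :=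
  ρ.map some + c • dirac none

variable (ρ : Measure α) (c : ℝ≥0∞)

lemma withNoneMass_apply_some_image {A : Set α} (hA : MeasurableSet A) :
    ρ.withNoneMass c (some '' A) = ρ A := by
  rw [withNoneMass, add_apply, map_apply measurable_some (measurableSet_some_image hA),
    preimage_image_eq _ (Option.some_injective α), smul_apply,
    dirac_apply' _ (measurableSet_some_image hA), indicator_of_notMem (by simp)]
  simp

lemma withNoneMass_apply_none : ρ.withNoneMass c {none} = c := by
  simp [withNoneMass, map_apply measurable_some measurableSet_none, preimage_some_singleton_none]

lemma withNoneMass_apply_univ : ρ.withNoneMass c univ = ρ univ + c := by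
  simp [withNoneMass, map_apply measurable_some MeasurableSet.univ]

lemma withNoneMass_mono {ρ ρ' : Measure α} {c c' : ℝ≥0∞} (hρ : ρ ≤ ρ') (hc : c ≤ c') :
    ρ.withNoneMass c ≤ ρ'.withNoneMass c' :=
  add_le_add (map_mono hρ measurable_some)
    (le_iff'.2 fun s => by simpa only [smul_apply, smul_eq_mul] using mul_le_mul_left hc _)

end MeasureTheory.Measure

end OptionMeasure

lemma MeasureTheory.Measure.pi_mono {ι : Type*} [Fintype ι] {α : ι → Type*}
    [∀ i, MeasurableSpace (α i)] {μ ν : ∀ i, Measure (α i)} (h : ∀ i, μ i ≤ ν i) :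
    Measure.pi μ ≤ Measure.pi ν := by
  refine Measure.le_iff.2 fun s hs => ?_
  rw [Measure.pi_def, Measure.pi_def, toMeasure_apply _ _ hs, toMeasure_apply _ _ hs]
  refine (OuterMeasure.le_pi.2 fun t _ => ?_) s
  exact (OuterMeasure.pi_pi_le _ t).trans
    (Finset.prod_le_prod' fun i _ => Measure.le_iff'.1 (h i) (t i))

lemma one_sub_pow_le_mul_one_sub {r : ℝ} (hr : 0 ≤ r) (n : ℕ) : 1 - r ^ n ≤ n * (1 - r) := by
  have := one_add_mul_le_pow (a := r - 1) (by linarith) n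
  rw [add_sub_cancel] at this
  linarith

section TotalVariation

variable {α : Type*} [MeasurableSpace α]

lemma MeasureTheory.Measure.real_le_of_le {μ ν : Measure α} [IsFiniteMeasure ν] (h : μ ≤ ν)
    (s : Set α) : μ.real s ≤ ν.real s :=
  ENNReal.toReal_mono (measure_ne_top ν s) (Measure.le_iff'.1 h s)

lemma tvDist_le_one_sub_of_le {P Q ν : Measure α} [IsProbabilityMeasure P]
    [IsProbabilityMeasure Q] [IsFiniteMeasure ν] (hP : ν ≤ P) (hQ : ν ≤ Q) :
    tvDist P Q ≤ 1 - ν.real univ := by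
  refine ciSup_le fun ⟨s, hs⟩ => ?_
  simp only [← measureReal_def]
  -- `P s = 1 - P sᶜ ≤ 1 - ν sᶜ` and `ν s ≤ Q s`, and symmetrically
  have hν := measureReal_add_measureReal_compl (μ := ν) hs
  have hPc := probReal_compl_eq_one_sub (μ := P) hs
  have hQc := probReal_compl_eq_one_sub (μ := Q) hs
  have := Measure.real_le_of_le hP s; have := Measure.real_le_of_le hP sᶜ
  have := Measure.real_le_of_le hQ s; have := Measure.real_le_of_le hQ sᶜ
  rw [abs_sub_le_iff]
  constructor <;> linarith

lemma tvDist_pi_le_of_le {ι : Type*} [Fintype ι] {P Q ν : Measure α} [IsProbabilityMeasure P]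
    [IsProbabilityMeasure Q] [IsFiniteMeasure ν] (hP : ν ≤ P) (hQ : ν ≤ Q) :
    tvDist (Measure.pi fun _ : ι => P) (Measure.pi fun _ : ι => Q) ≤
      Fintype.card ι * (1 - ν.real univ) :=
  calc tvDist (Measure.pi fun _ : ι => P) (Measure.pi fun _ : ι => Q)
      ≤ 1 - (Measure.pi fun _ : ι => ν).real univ :=
        tvDist_le_one_sub_of_le (Measure.pi_mono fun _ => hP) (Measure.pi_mono fun _ => hQ)
    _ = 1 - ν.real univ ^ Fintype.card ι := by
        simp [measureReal_def, Measure.pi_univ, ENNReal.toReal_pow]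
    _ ≤ Fintype.card ι * (1 - ν.real univ) := one_sub_pow_le_mul_one_sub measureReal_nonneg _

end TotalVariation

section Corruption

variable {α : Type*} [MeasurableSpace α] (μ : Measure α)

lemma withDensity_ofReal_apply_eq_integral {f : α → ℝ} (hf : Integrable f μ)
    (hf0 : ∀ x, 0 ≤ f x) {A : Set α} (hA : MeasurableSet A) :
    μ.withDensity (fun x => ENNReal.ofReal (f x)) A = ENNReal.ofReal (∫ x in A, f x ∂μ) := by
  rw [withDensity_apply _ hA,
    ofReal_integral_eq_lintegral_ofReal hf.integrableOn (ae_of_all _ hf0)]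

noncomputable def corruptedMeasure (f : α → ℝ) : Measure (Option α) :=
  (μ.withDensity fun x => ENNReal.ofReal (f x)).withNoneMass (ENNReal.ofReal (1 - ∫ x, f x ∂μ))

variable {μ}

lemma corruptedMeasure_apply_univ {f : α → ℝ} (hf : Integrable f μ) (hf0 : ∀ x, 0 ≤ f x)
    (hf1 : ∫ x, f x ∂μ ≤ 1) : corruptedMeasure μ f univ = 1 := by
  rw [corruptedMeasure, Measure.withNoneMass_apply_univ,
    withDensity_ofReal_apply_eq_integral μ hf hf0 MeasurableSet.univ, Measure.restrict_univ,
    ← ENNReal.ofReal_add (integral_nonneg hf0) (sub_nonneg.2 hf1), add_sub_cancel,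
    ENNReal.ofReal_one]

lemma tvDist_pi_corruptedMeasure_le {ι : Type*} [Fintype ι] {f₁ f₂ g : α → ℝ}
    (hf₁ : Integrable f₁ μ) (hf₂ : Integrable f₂ μ) (hg : Integrable g μ) (hg0 : ∀ x, 0 ≤ g x)
    (hgf₁ : ∀ x, g x ≤ f₁ x) (hgf₂ : ∀ x, g x ≤ f₂ x) (hf₁1 : ∫ x, f₁ x ∂μ ≤ 1)
    (hf₁₂ : ∫ x, f₁ x ∂μ = ∫ x, f₂ x ∂μ) :
    tvDist (Measure.pi fun _ : ι => corruptedMeasure μ f₁)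
        (Measure.pi fun _ : ι => corruptedMeasure μ f₂) ≤
      Fintype.card ι * ∫ x, (f₁ x - g x) ∂μ := by
  have : IsProbabilityMeasure (corruptedMeasure μ f₁) :=
    ⟨corruptedMeasure_apply_univ hf₁ (fun x => (hg0 x).trans (hgf₁ x)) hf₁1⟩
  have : IsProbabilityMeasure (corruptedMeasure μ f₂) :=
    ⟨corruptedMeasure_apply_univ hf₂ (fun x => (hg0 x).trans (hgf₂ x)) (hf₁₂ ▸ hf₁1)⟩
  set ν := (μ.withDensity fun x => ENNReal.ofReal (g x)).withNoneMass
    (ENNReal.ofReal (1 - ∫ x, f₁ x ∂μ))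
  have hν : ν univ = ENNReal.ofReal (∫ x, g x ∂μ + (1 - ∫ x, f₁ x ∂μ)) := by
    rw [Measure.withNoneMass_apply_univ,
      withDensity_ofReal_apply_eq_integral μ hg hg0 MeasurableSet.univ, Measure.restrict_univ,
      ENNReal.ofReal_add (integral_nonneg hg0) (sub_nonneg.2 hf₁1)]
  have : IsFiniteMeasure ν := ⟨by rw [hν]; exact ENNReal.ofReal_lt_top⟩
  have hdens {f : α → ℝ} (hgf : ∀ x, g x ≤ f x) :
      μ.withDensity (fun x => ENNReal.ofReal (g x)) ≤
        μ.withDensity fun x => ENNReal.ofReal (f x) :=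
    withDensity_mono (ae_of_all _ fun x => ENNReal.ofReal_le_ofReal (hgf x))
  have hν₁ : ν ≤ corruptedMeasure μ f₁ := Measure.withNoneMass_mono (hdens hgf₁) le_rfl
  have hν₂ : ν ≤ corruptedMeasure μ f₂ := Measure.withNoneMass_mono (hdens hgf₂) (by rw [hf₁₂])
  have hνreal : 1 - ν.real univ = ∫ x, (f₁ x - g x) ∂μ := by
    rw [measureReal_def, hν, ENNReal.toReal_ofReal
      (by linarith [(integral_nonneg hg0 : 0 ≤ ∫ x, g x ∂μ)]),
      integral_sub hf₁ hg]
    ring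
  exact hνreal ▸ tvDist_pi_le_of_le hν₁ hν₂

lemma isCorruptedVersion_corruptedMeasure {ε : ℝ} {p f : ℝ → ℝ} (hp : Integrable p)
    (hp1 : ∫ x, p x = 1) (hf : Measurable f) (hfi : Integrable f) (hf0 : ∀ x, 0 ≤ f x)
    (hfp : ∀ x, (1 - ε) * p x ≤ f x ∧ f x ≤ p x) :
    IsCorruptedVersion ε p (corruptedMeasure volume f) := by
  have hf1 : ∫ x, f x ≤ 1 := hp1 ▸ integral_mono hfi hp fun x => (hfp x).2
  refine ⟨⟨corruptedMeasure_apply_univ hfi hf0 hf1⟩, f, hf, hfp, fun A hA => ?_, ?_⟩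
  · rw [corruptedMeasure, Measure.withNoneMass_apply_some_image _ _ hA,
      withDensity_ofReal_apply_eq_integral _ hfi hf0 hA]
  · exact Measure.withNoneMass_apply_none _ _

end Corruption

section TrimmedDensity

variable {α : Type*} {ε : ℝ} {p q : α → ℝ}

noncomputable def trimmedDensity (ε : ℝ) (p q : α → ℝ) (x : α) : ℝ :=
  max ((1 - ε) * p x) (min (p x) (q x))

lemma min_le_trimmedDensity (x : α) : min (p x) (q x) ≤ trimmedDensity ε p q x :=
  le_max_right _ _

lemma trimmedDensity_nonneg (hp : ∀ x, 0 ≤ p x) (hq : ∀ x, 0 ≤ q x) (x : α) :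
    0 ≤ trimmedDensity ε p q x :=
  (le_min (hp x) (hq x)).trans (min_le_trimmedDensity x)

lemma trimmedDensity_le (hε : 0 ≤ ε) (hp : ∀ x, 0 ≤ p x) (x : α) :
    trimmedDensity ε p q x ≤ p x :=
  max_le (by nlinarith [hp x]) (min_le_left _ _)

lemma trimmedDensity_sub_min_le_indicator (hε : 0 ≤ ε) (hp : ∀ x, 0 ≤ p x)
    (hq : ∀ x, 0 ≤ q x) {s : Set α} (hs : ∀ x ∉ s, (1 - ε) * p x ≤ q x) (x : α) :
    trimmedDensity ε p q x - min (p x) (q x) ≤ s.indicator p x := by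
  by_cases hx : x ∈ s
  · rw [indicator_of_mem hx]
    linarith [trimmedDensity_le (q := q) hε hp x, le_min (hp x) (hq x)]
  · rw [indicator_of_notMem hx, trimmedDensity,
      max_eq_right (le_min (by nlinarith [hp x]) (hs x hx)), sub_self]

lemma trimmedDensity_swap [InvolutiveNeg α] (hpq : ∀ x, q x = p (-x)) (x : α) :
    trimmedDensity ε q p x = trimmedDensity ε p q (-x) := by
  rw [trimmedDensity, trimmedDensity, hpq x, hpq (-x), neg_neg, min_comm]

variable [MeasurableSpace α]

lemma Measurable.trimmedDensity (hp : Measurable p) (hq : Measurable q) :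
    Measurable (trimmedDensity ε p q) :=
  (hp.const_mul _).max (hp.min hq)

lemma integrable_trimmedDensity {μ : Measure α} (hε : 0 ≤ ε) (hpm : Measurable p)
    (hqm : Measurable q) (hp0 : ∀ x, 0 ≤ p x) (hq0 : ∀ x, 0 ≤ q x) (hp : Integrable p μ) :
    Integrable (trimmedDensity ε p q) μ :=
  hp.mono' (hpm.trimmedDensity hqm).aestronglyMeasurable (ae_of_all _ fun x => by
    rw [Real.norm_of_nonneg (trimmedDensity_nonneg hp0 hq0 x)]
    exact trimmedDensity_le hε hp0 x)

end TrimmedDensity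

section Gaussian

lemma gaussPDF_sub (μ x : ℝ) : gaussPDF (x - μ) = gaussianPDFReal μ 1 x := by
  rw [gaussPDF, gaussianPDFReal, NNReal.coe_one, mul_one, mul_one, div_eq_inv_mul]

lemma gaussianPDFReal_neg (μ : ℝ) (v : ℝ≥0) (x : ℝ) :
    gaussianPDFReal (-μ) v (-x) = gaussianPDFReal μ v x := by
  rw [gaussianPDFReal, gaussianPDFReal, ← neg_add', neg_sq, sub_eq_add_neg]

lemma gaussianPDFReal_neg_mul_exp (a x : ℝ) :
    gaussianPDFReal (-a) 1 x * exp (2 * a * x) = gaussianPDFReal a 1 x := by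
  rw [gaussianPDFReal, gaussianPDFReal, mul_assoc, ← exp_add]
  congr 2
  push_cast
  ring

lemma integral_Iic_gaussianPDFReal_le {μ a : ℝ} {v : ℝ≥0} (hv : v ≠ 0) (ha : a ≤ μ) :
    ∫ x in Iic a, gaussianPDFReal μ v x ≤ exp (-(μ - a) ^ 2 / (2 * v)) := by
  have hv0 : (0 : ℝ) < v := by positivity
  -- Chernoff's bound at `t = -(μ - a) / v`
  have h := measure_le_le_exp_mul_mgf (μ := gaussianReal μ v) (X := id) a
    (t := -(μ - a) / v) (div_nonpos_of_nonpos_of_nonneg (by linarith) hv0.le)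
    (integrable_exp_mul_gaussianReal _)
  rw [mgf_id_gaussianReal, ← exp_add, measureReal_def, show {x : ℝ | id x ≤ a} = Iic a from rfl,
    gaussianReal_apply_eq_integral _ hv, ENNReal.toReal_ofReal
      (setIntegral_nonneg measurableSet_Iic fun x _ => gaussianPDFReal_nonneg μ v x)] at h
  convert h using 2
  field_simp
  ring

end Gaussian

section GaussianPair

noncomputable def gaussianTrimmedDensity (ε a : ℝ) : ℝ → ℝ :=
  trimmedDensity ε (gaussianPDFReal (-a) 1) (gaussianPDFReal a 1)

variable {ε : ℝ}

lemma integrable_gaussianTrimmedDensity (hε : 0 ≤ ε) (a : ℝ) :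
    Integrable (gaussianTrimmedDensity ε a) :=
  integrable_trimmedDensity hε (measurable_gaussianPDFReal _ _) (measurable_gaussianPDFReal _ _)
    (gaussianPDFReal_nonneg _ _) (gaussianPDFReal_nonneg _ _) (integrable_gaussianPDFReal _ _)

lemma isCorruptedVersion_gaussianTrimmedDensity (hε : 0 ≤ ε) (a : ℝ) :
    IsCorruptedVersion ε (gaussianPDFReal (-a) 1)
      (corruptedMeasure volume (gaussianTrimmedDensity ε a)) :=
  isCorruptedVersion_corruptedMeasure (integrable_gaussianPDFReal _ _)
    (integral_gaussianPDFReal_eq_one _ one_ne_zero)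
    ((measurable_gaussianPDFReal _ _).trimmedDensity (measurable_gaussianPDFReal _ _))
    (integrable_gaussianTrimmedDensity hε a)
    (trimmedDensity_nonneg (gaussianPDFReal_nonneg _ _) (gaussianPDFReal_nonneg _ _))
    fun x => ⟨le_max_left _ _, trimmedDensity_le hε (gaussianPDFReal_nonneg _ _) x⟩

lemma gaussianTrimmedDensity_neg (a x : ℝ) :
    gaussianTrimmedDensity ε a (-x) = gaussianTrimmedDensity ε (-a) x := by
  rw [gaussianTrimmedDensity, gaussianTrimmedDensity, neg_neg]
  exact (trimmedDensity_swap (fun y => (gaussianPDFReal_neg a 1 y).symm) x).symm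

lemma tvDist_pi_gaussianTrimmedDensity_le {ι : Type*} [Fintype ι] (hε : 0 ≤ ε) (a : ℝ) :
    tvDist (Measure.pi fun _ : ι => corruptedMeasure volume (gaussianTrimmedDensity ε a))
        (Measure.pi fun _ : ι => corruptedMeasure volume (gaussianTrimmedDensity ε (-a))) ≤
      Fintype.card ι * ∫ x, (gaussianTrimmedDensity ε a x -
        min (gaussianPDFReal (-a) 1 x) (gaussianPDFReal a 1 x)) := by
  have hle : ∫ x, gaussianTrimmedDensity ε a x ≤ 1 :=
    (integral_mono (integrable_gaussianTrimmedDensity hε a) (integrable_gaussianPDFReal _ _)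
      (trimmedDensity_le hε (gaussianPDFReal_nonneg _ _))).trans_eq
      (integral_gaussianPDFReal_eq_one _ one_ne_zero)
  have hsymm : ∫ x, gaussianTrimmedDensity ε a x = ∫ x, gaussianTrimmedDensity ε (-a) x := by
    simp_rw [← gaussianTrimmedDensity_neg]
    exact (integral_neg_eq_self _ _).symm
  refine tvDist_pi_corruptedMeasure_le (integrable_gaussianTrimmedDensity hε a)
    (integrable_gaussianTrimmedDensity hε (-a))
    ((integrable_gaussianPDFReal _ _).inf (integrable_gaussianPDFReal _ _))
    (fun x => le_min (gaussianPDFReal_nonneg _ _ x) (gaussianPDFReal_nonneg _ _ x))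
    min_le_trimmedDensity (fun x => ?_) hle hsymm
  rw [gaussianTrimmedDensity, neg_neg, min_comm]
  exact min_le_trimmedDensity x

lemma integral_gaussianTrimmedDensity_sub_min_le {δ : ℝ} (hε : ε ∈ Ico (0 : ℝ) 1)
    (hδ : 0 < δ) (hδε : δ ^ 2 ≤ -log (1 - ε)) :
    ∫ x, (gaussianTrimmedDensity ε (δ / 2) x -
        min (gaussianPDFReal (-(δ / 2)) 1 x) (gaussianPDFReal (δ / 2) 1 x)) ≤
      exp (-(1 / 8) * (-log (1 - ε) / δ) ^ 2) := by
  set L := -log (1 - ε)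
  set T := L / δ
  set p₁ := gaussianPDFReal (-(δ / 2)) 1
  have hδT : δ ≤ T := by rw [le_div_iff₀ hδ]; nlinarith
  -- beyond `-T` the likelihood ratio `exp (δ x)` of the two densities exceeds `1 - ε = exp (-L)`
  have hratio : ∀ x ∉ Iic (-T), (1 - ε) * p₁ x ≤ gaussianPDFReal (δ / 2) 1 x := by
    intro x hx
    have hLx : -L ≤ δ * x := by
      have := mul_lt_mul_of_pos_right (not_le.1 hx) hδ
      rw [neg_mul, div_mul_cancel₀ _ hδ.ne'] at this
      linarith
    rw [← gaussianPDFReal_neg_mul_exp, mul_comm (1 - ε)]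
    refine mul_le_mul_of_nonneg_left ?_ (gaussianPDFReal_nonneg _ _ _)
    rw [← exp_log (sub_pos.2 hε.2), ← neg_neg (log (1 - ε))]
    exact exp_le_exp.2 (by linarith)
  calc _ ≤ ∫ x, (Iic (-T)).indicator p₁ x :=
        integral_mono_of_nonneg (ae_of_all _ fun x => sub_nonneg.2 (min_le_trimmedDensity x))
          ((integrable_gaussianPDFReal _ _).indicator measurableSet_Iic)
          (ae_of_all _ (trimmedDensity_sub_min_le_indicator hε.1 (gaussianPDFReal_nonneg _ _)
            (gaussianPDFReal_nonneg _ _) hratio))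
    _ = ∫ x in Iic (-T), p₁ x := integral_indicator measurableSet_Iic
    _ ≤ exp (-(-(δ / 2) - -T) ^ 2 / (2 * ((1 : ℝ≥0) : ℝ))) :=
        integral_Iic_gaussianPDFReal_le one_ne_zero (by linarith)
    _ ≤ exp (-(1 / 8) * T ^ 2) := exp_le_exp.2 (by push_cast; nlinarith)

end GaussianPair

lemma log_one_add_div_one_sub {ε : ℝ} (hε : ε < 1) :
    log (1 + ε / (1 - ε)) = -log (1 - ε) := by
  rw [← log_inv, inv_eq_one_div, one_add_div (sub_ne_zero.2 hε.ne'), sub_add_cancel]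

/-- There is an absolute constant `c > 0` such that for every `ε ∈ (0,1)`, every `δ > 0`
with `δ² ≤ log(1 + ε/(1−ε))`, and every `n ≥ 1`, there exist `ε`-corrupted versions `Q₁`
of `N(−δ/2,1)` and `Q₂` of `N(δ/2,1)` with
`D_TV(Q₁^⊗n, Q₂^⊗n) ≤ (n/(1−ε))·exp(−c·((1/δ)·log(1 + ε/(1−ε)))²)`. -/
theorem stmt7 :
    ∃ c : ℝ, 0 < c ∧
      ∀ (ε δ : ℝ) (n : ℕ), ε ∈ Set.Ioo (0 : ℝ) 1 → 0 < δ →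
        δ ^ 2 ≤ Real.log (1 + ε / (1 - ε)) → 0 < n →
        ∃ Q₁ Q₂ : Measure (Option ℝ),
          IsCorruptedVersion ε (fun x => gaussPDF (x + δ / 2)) Q₁ ∧
          IsCorruptedVersion ε (fun x => gaussPDF (x - δ / 2)) Q₂ ∧
          tvDist (Measure.pi fun _ : Fin n => Q₁) (Measure.pi fun _ : Fin n => Q₂) ≤
            ((n : ℝ) / (1 - ε)) *
              Real.exp (-c * ((1 / δ) * Real.log (1 + ε / (1 - ε))) ^ 2) := by
  refine ⟨1 / 8, by norm_num, fun ε δ n hε hδ hδε _ => ?_⟩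
  rw [log_one_add_div_one_sub hε.2] at hδε ⊢
  have hp₁ : (fun x => gaussPDF (x + δ / 2)) = gaussianPDFReal (-(δ / 2)) 1 :=
    funext fun x => by rw [← gaussPDF_sub, sub_neg_eq_add]
  have hp₂ : (fun x => gaussPDF (x - δ / 2)) = gaussianPDFReal (-(-(δ / 2))) 1 :=
    funext fun x => by rw [neg_neg, gaussPDF_sub]
  rw [hp₁, hp₂]
  refine ⟨_, _, isCorruptedVersion_gaussianTrimmedDensity hε.1.le (δ / 2),
    isCorruptedVersion_gaussianTrimmedDensity hε.1.le (-(δ / 2)), ?_⟩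
  calc _ ≤ n * ∫ x, (gaussianTrimmedDensity ε (δ / 2) x -
          min (gaussianPDFReal (-(δ / 2)) 1 x) (gaussianPDFReal (δ / 2) 1 x)) := by
        simpa using tvDist_pi_gaussianTrimmedDensity_le (ι := Fin n) hε.1.le (δ / 2)
    _ ≤ n * exp (-(1 / 8) * (-log (1 - ε) / δ) ^ 2) := by
        gcongr
        exact integral_gaussianTrimmedDensity_sub_min_le (Ioo_subset_Ico_self hε) hδ hδε
    _ ≤ _ := by
        rw [one_div_mul_eq_div]
        gcongr
        exact le_div_self n.cast_nonneg (sub_pos.2 hε.2) (by linarith [hε.1])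
end
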